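/- Let (X_n) be an irreducible aperiodic Markov chain on a finite state space A with stationary distribution π, and let L_n = Σ_{k=1}^n 1{X_k = X_{n+1}}. Then for any β ∈ ℝ, any ε ∈ [0, π_∧) where π_∧ = min_a π_a, any r > 0, and any initial distribution η: lim_{n→∞} n^β P_η{L_n/n ≤ ε} = 0 and lim_{n→∞} n^β P_η{L_n = r} = 0. -/

import Mathlib

/-!
Write `N_n(a)` for the number of visits to `a` before time `n`. Then `L_n = N_n(X_n)`, so
`{L_n ≤ εn} ⊆ ⋃ₐ {N_n(a) ≤ εn}`, and `{L_n = r} ⊆ {L_n ≤ ε'n}` for any `0 < ε' < min π` once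
`n ≥ r / ε'`. It therefore suffices that `P{N_n(a) ≤ εn}` decays geometrically when `ε < π a`.

By Chernoff, `P{N_n(a) ≤ εn} ≤ e^{θεn} E[e^{-θ N_n(a)}]`, and `E_x[e^{-θ N_n(a)}] = (Mⁿ 1)(x)`
for the substochastic matrix `M = diag(e^{-θ 1_a}) Q`; hence `Mⁿ 1 ≤ c^⌊n/T⌋` as soon as
`M^T 1 ≤ c`. A second-order expansion gives `M^T 1 ≤ 1 - (1 - e^{-θ}) E_x N_T(a) + O(θ²T²)`.
Doeblin's contraction argument gives `Qᵏ(x, a) → π a`, so by Cesàro `E_x N_T(a) ≥ pT` for a fixed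
`p ∈ (ε, π a)`, all `x` and all large `T`; taking `θ` of order `(p - ε) / T` makes `e^{θεT} c < 1`.
-/

open MeasureTheory ENNReal Finset Filter

/-- The finite-dimensional law of a Markov chain `X` (indexed from 0) with real initial
distribution `η` and real transition matrix `Q`. -/
def IsRealChainLaw {A Ω : Type*} [Fintype A] [MeasurableSpace Ω]
    (P : Measure Ω) (X : ℕ → Ω → A) (η : A → ℝ) (Q : A → A → ℝ) : Prop :=
  ∀ (n : ℕ) (a : ℕ → A),
    P (⋂ i ∈ Finset.range (n + 1), {ω | X i ω = a i}) =
      ENNReal.ofReal (η (a 0) * ∏ i ∈ Finset.range n, Q (a i) (a (i + 1)))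

/-- `t`-step transition matrix of a kernel `Q` on a finite set. -/
noncomputable def mpow {A : Type*} [Fintype A] [DecidableEq A] (Q : A → A → ℝ) :
    ℕ → A → A → ℝ
  | 0 => fun x y => if x = y then 1 else 0
  | (t + 1) => fun x y => ∑ z, Q x z * mpow Q t z y

open Matrix

theorem exists_pos_forall_lt {ι : Type*} [Finite ι] {f : ι → ℝ} (hf : ∀ i, 0 < f i) :
    ∃ c > 0, ∀ i, c < f i :=
  (((eventually_all.2 fun i => eventually_lt_nhds (hf i)).filter_mono
    (nhdsWithin_le_nhds (s := Set.Ioi 0))).and self_mem_nhdsWithin).exists.imp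
    fun _ h => ⟨h.2, h.1⟩

theorem eventually_mul_le_sum_range {u : ℕ → ℝ} {l p : ℝ} (h : Tendsto u atTop (nhds l))
    (hp : p < l) : ∀ᶠ T : ℕ in atTop, p * T ≤ ∑ k ∈ range T, u k := by
  filter_upwards [h.cesaro.eventually (eventually_gt_nhds hp), eventually_gt_atTop 0]
    with T hT hT0
  rw [inv_mul_eq_div, lt_div_iff₀ (by positivity)] at hT
  exact hT.le

theorem tendsto_rpow_mul_exp_neg_pow_div (β : ℝ) {γ : ℝ} (hγ : 0 < γ) {T : ℕ} (hT : 0 < T) :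
    Tendsto (fun n : ℕ => (n : ℝ) ^ β * Real.exp (-γ) ^ (n / T)) atTop (nhds 0) := by
  have hlim := ((tendsto_rpow_mul_exp_neg_mul_atTop_nhds_zero β (γ / T)
    (by positivity)).comp tendsto_natCast_atTop_atTop).const_mul (Real.exp γ)
  rw [mul_zero] at hlim
  refine squeeze_zero (fun n => by positivity) (fun n => ?_) hlim
  have hfloor : (n : ℝ) / T - 1 ≤ ((n / T : ℕ) : ℝ) := by
    rw [← Nat.floor_div_eq_div (K := ℝ)]
    exact (Nat.sub_one_lt_floor _).le
  calc (n : ℝ) ^ β * Real.exp (-γ) ^ (n / T) ≤ (n : ℝ) ^ β * Real.exp (γ + -(γ / T) * n) := by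
        rw [← Real.exp_nat_mul]
        gcongr
        calc ((n / T : ℕ) : ℝ) * -γ ≤ ((n : ℝ) / T - 1) * -γ :=
              mul_le_mul_of_nonpos_right hfloor (by linarith)
          _ = γ + -(γ / T) * n := by ring
    _ = Real.exp γ * ((n : ℝ) ^ β * Real.exp (-(γ / T) * n)) := by rw [Real.exp_add]; ring

theorem mpow_eq_pow {A : Type*} [Fintype A] [DecidableEq A] (Q : Matrix A A ℝ) (t : ℕ) :
    mpow Q t = Q ^ t := by
  induction t with
  | zero => ext x y; simp [mpow, one_apply]
  | succ t ih => ext x y; simp [mpow, pow_succ', mul_apply, ih]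

namespace Matrix

variable {A : Type*} [Fintype A]

theorem monotone_mulVec_of_nonneg {M : Matrix A A ℝ} (hM : ∀ i j, 0 ≤ M i j) :
    Monotone (M *ᵥ ·) :=
  fun _ _ hvw i => sum_le_sum fun j _ => mul_le_mul_of_nonneg_left (hvw j) (hM i j)

variable [DecidableEq A]

section Substochastic

variable {M : Matrix A A ℝ} (hM : ∀ i j, 0 ≤ M i j) (hM1 : M *ᵥ 1 ≤ 1)
include hM hM1

theorem pow_mulVec_one_le_one (n : ℕ) : M ^ n *ᵥ 1 ≤ 1 := by
  induction n with
  | zero => simp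
  | succ n ih =>
    rw [pow_succ', ← mulVec_mulVec]
    exact (monotone_mulVec_of_nonneg hM ih).trans hM1

theorem pow_mulVec_one_le_pow_div {T : ℕ} {c : ℝ} (hc : 0 ≤ c) (hT : M ^ T *ᵥ 1 ≤ c • 1)
    (n : ℕ) : M ^ n *ᵥ 1 ≤ c ^ (n / T) • 1 := by
  have blocks : ∀ j r, M ^ (r + T * j) *ᵥ 1 ≤ c ^ j • 1 := by
    intro j r
    induction j with
    | zero => simpa using pow_mulVec_one_le_one hM hM1 r
    | succ j ih =>
      calc M ^ (r + T * (j + 1)) *ᵥ 1 = M ^ (r + T * j) *ᵥ (M ^ T *ᵥ 1) := by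
            rw [mulVec_mulVec, ← pow_add, mul_add_one, add_assoc]
        _ ≤ M ^ (r + T * j) *ᵥ (c • 1) := monotone_mulVec_of_nonneg (pow_apply_nonneg hM _) hT
        _ = c • (M ^ (r + T * j) *ᵥ 1) := mulVec_smul _ _ _
        _ ≤ c • (c ^ j • 1) := smul_le_smul_of_nonneg_left ih hc
        _ = c ^ (j + 1) • 1 := by rw [smul_smul, pow_succ']
  simpa only [Nat.mod_add_div] using blocks (n / T) (n % T)

end Substochastic

variable {Q : Matrix A A ℝ} {π : A → ℝ}

theorem vecMul_pow_of_vecMul_eq (hπ : π ᵥ* Q = π) (k : ℕ) : π ᵥ* Q ^ k = π := by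
  induction k with
  | zero => simp
  | succ k ih => rw [pow_succ, ← vecMul_vecMul, ih, hπ]

section Doeblin

variable (hQ : Q ∈ rowStochastic ℝ A) (hπ : π ᵥ* Q = π) (hπ1 : ∑ z, π z = 1)
  {t : ℕ} {δ : ℝ} (hmin : ∀ x z, δ * π z ≤ (Q ^ t) x z)
include hQ hπ hπ1 hmin

theorem abs_pow_add_apply_sub_le {n : ℕ} {y : A} {b : ℝ} (hb : ∀ z, |(Q ^ n) z y - π y| ≤ b)
    (x : A) : |(Q ^ (t + n)) x y - π y| ≤ (1 - δ) * b := by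
  have hrow : ∑ z, (Q ^ t) x z = 1 := sum_row_of_mem_rowStochastic (pow_mem hQ t) x
  have hstat : ∑ z, π z * (Q ^ n) z y = π y := congrFun (vecMul_pow_of_vecMul_eq hπ n) y
  have hcoef : ∀ z, 0 ≤ (Q ^ t) x z - δ * π z := fun z => sub_nonneg.2 (hmin x z)
  have hsplit : (Q ^ (t + n)) x y - π y =
      ∑ z, ((Q ^ t) x z - δ * π z) * ((Q ^ n) z y - π y) := by
    simp only [pow_add, mul_apply, sub_mul, mul_sub, sum_sub_distrib, ← sum_mul, mul_assoc,
      ← mul_sum, hrow, hstat, hπ1]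
    ring
  calc |(Q ^ (t + n)) x y - π y|
      ≤ ∑ z, ((Q ^ t) x z - δ * π z) * |(Q ^ n) z y - π y| := by
        rw [hsplit]
        refine (abs_sum_le_sum_abs _ _).trans_eq (sum_congr rfl fun z _ => ?_)
        rw [abs_mul, abs_of_nonneg (hcoef z)]
    _ ≤ ∑ z, ((Q ^ t) x z - δ * π z) * b :=
        sum_le_sum fun z _ => mul_le_mul_of_nonneg_left (hb z) (hcoef z)
    _ = (1 - δ) * b := by rw [← sum_mul, sum_sub_distrib, hrow, ← mul_sum, hπ1, mul_one]

theorem abs_pow_apply_sub_le (hπ0 : ∀ z, 0 ≤ π z) (k : ℕ) (x y : A) :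
    |(Q ^ k) x y - π y| ≤ (1 - δ) ^ (k / t) := by
  have blocks : ∀ j r x, |(Q ^ (t * j + r)) x y - π y| ≤ (1 - δ) ^ j := by
    intro j r
    induction j with
    | zero =>
      intro x
      have h0 := nonneg_of_mem_rowStochastic (pow_mem hQ r) (i := x) (j := y)
      have h1 := le_one_of_mem_rowStochastic (pow_mem hQ r) (i := x) (j := y)
      have hπy : π y ≤ 1 := hπ1 ▸ single_le_sum (fun z _ => hπ0 z) (mem_univ y)
      rw [mul_zero, zero_add, pow_zero, abs_sub_le_iff]
      constructor <;> linarith [hπ0 y]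
    | succ j ih =>
      intro x
      rw [mul_add_one, add_comm (t * j), add_assoc, pow_succ']
      exact abs_pow_add_apply_sub_le hQ hπ hπ1 hmin ih x
  simpa only [Nat.div_add_mod] using blocks (k / t) (k % t) x

theorem tendsto_pow_apply (hπ0 : ∀ z, 0 ≤ π z) (ht : 0 < t) (hδ : 0 < δ) (x y : A) :
    Tendsto (fun k => (Q ^ k) x y) atTop (nhds (π y)) := by
  have hδ1 : δ ≤ 1 := by
    have := sum_le_sum fun z (_ : z ∈ univ) => hmin x z
    rwa [← mul_sum, hπ1, mul_one, sum_row_of_mem_rowStochastic (pow_mem hQ t)] at this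
  have hgeom : Tendsto (fun k => (1 - δ) ^ (k / t)) atTop (nhds 0) :=
    (_root_.tendsto_pow_atTop_nhds_zero_of_lt_one (by linarith) (by linarith)).comp
      (Nat.tendsto_div_const_atTop ht.ne')
  exact tendsto_iff_norm_sub_tendsto_zero.2 <| squeeze_zero (fun _ => norm_nonneg _)
    (fun k => (Real.norm_eq_abs _).trans_le (abs_pow_apply_sub_le hQ hπ hπ1 hmin hπ0 k x y)) hgeom

end Doeblin

theorem exists_minorization (hQ : Q ∈ rowStochastic ℝ A) (hπ0 : ∀ z, 0 ≤ π z)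
    (hπ1 : ∑ z, π z = 1) (hprim : ∃ t, ∀ x y, 0 < (Q ^ t) x y) :
    ∃ t > 0, ∃ δ > 0, ∀ x z, δ * π z ≤ (Q ^ t) x z := by
  obtain ⟨t, ht⟩ := hprim
  obtain ⟨δ, hδ, hδt⟩ := exists_pos_forall_lt fun p : A × A => ht p.1 p.2
  refine ⟨t + 1, t.succ_pos, δ, hδ, fun x z => ?_⟩
  have hπz : π z ≤ 1 := hπ1 ▸ single_le_sum (fun w _ => hπ0 w) (mem_univ z)
  calc δ * π z ≤ ∑ w, Q x w * δ := by
        rw [← sum_mul, sum_row_of_mem_rowStochastic hQ, one_mul]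
        exact mul_le_of_le_one_right hδ.le hπz
    _ ≤ (Q ^ (t + 1)) x z := by
        rw [pow_succ', mul_apply]
        exact sum_le_sum fun w _ =>
          mul_le_mul_of_nonneg_left (hδt (w, z)).le (nonneg_of_mem_rowStochastic hQ)

/-- `(tilt Q a ρ ^ n *ᵥ 1) x` is `E_x[ρ ^ N]`, where `N` counts the visits to `a` at times
`0, …, n - 1` (see `sum_pathWeight` and `pathWeight_tilt`). -/
def tilt (Q : Matrix A A ℝ) (a : A) (ρ : ℝ) : Matrix A A ℝ :=
  diagonal (fun x => if x = a then ρ else 1) * Q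

theorem tilt_apply (a : A) (ρ : ℝ) (x y : A) :
    tilt Q a ρ x y = (if x = a then ρ else 1) * Q x y :=
  diagonal_mul _ _ _ _

theorem tilt_mulVec_apply (a : A) (ρ : ℝ) (v : A → ℝ) (x : A) :
    (tilt Q a ρ *ᵥ v) x = (if x = a then ρ else 1) * (Q *ᵥ v) x := by
  rw [tilt, ← mulVec_mulVec, mulVec_diagonal]

theorem tilt_nonneg (hQnn : ∀ x y, 0 ≤ Q x y) (a : A) {ρ : ℝ} (hρ : 0 ≤ ρ) (x y : A) :
    0 ≤ tilt Q a ρ x y := by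
  rw [tilt_apply]
  exact mul_nonneg (by split_ifs <;> norm_num [hρ]) (hQnn x y)

section Tilt

variable (hQ : Q ∈ rowStochastic ℝ A) (a : A)
include hQ

theorem tilt_mulVec_one_le_one {ρ : ℝ} (hρ : ρ ≤ 1) : tilt Q a ρ *ᵥ 1 ≤ 1 := fun x => by
  rw [tilt_mulVec_apply, one_vecMul_of_mem_rowStochastic hQ]
  split_ifs <;> simp [hρ]

theorem tilt_pow_mulVec_one_le {ρ : ℝ} (hρ0 : 0 ≤ ρ) (hρ1 : ρ ≤ 1) (m : ℕ) (x : A) :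
    (tilt Q a ρ ^ m *ᵥ 1) x ≤
      1 - (1 - ρ) * ∑ k ∈ range m, (Q ^ k) x a + ((1 - ρ) * m) ^ 2 := by
  induction m generalizing x with
  | zero => simp
  | succ m ih =>
    set α := 1 - ρ
    set e : A → ℝ := fun z => ∑ k ∈ range m, (Q ^ k) z a
    have hQx : ∑ z, Q x z = 1 := sum_row_of_mem_rowStochastic hQ x
    have he : ∀ z, e z ≤ m := fun z => by
      simpa using sum_le_sum fun k (_ : k ∈ range m) =>
        le_one_of_mem_rowStochastic (pow_mem hQ k) (i := z) (j := a)
    have hE0 : 0 ≤ ∑ z, Q x z * e z := sum_nonneg fun z _ =>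
      mul_nonneg (nonneg_of_mem_rowStochastic hQ)
        (sum_nonneg fun k _ => nonneg_of_mem_rowStochastic (pow_mem hQ k))
    have hEm : ∑ z, Q x z * e z ≤ m := by
      calc ∑ z, Q x z * e z ≤ ∑ z, Q x z * m :=
            sum_le_sum fun z _ => mul_le_mul_of_nonneg_left (he z) (nonneg_of_mem_rowStochastic hQ)
        _ = m := by rw [← sum_mul, hQx, one_mul]
    have hvisits : ∑ k ∈ range (m + 1), (Q ^ k) x a =
        (if x = a then 1 else 0) + ∑ z, Q x z * e z := by
      simp only [sum_range_succ', pow_succ', mul_apply, e, mul_sum, pow_zero, one_apply]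
      rw [sum_comm, add_comm]
    have hstep : (Q *ᵥ (tilt Q a ρ ^ m *ᵥ 1)) x ≤ 1 - α * ∑ z, Q x z * e z + (α * m) ^ 2 := by
      calc (Q *ᵥ (tilt Q a ρ ^ m *ᵥ 1)) x ≤ ∑ z, Q x z * (1 - α * e z + (α * m) ^ 2) :=
            sum_le_sum fun z _ => mul_le_mul_of_nonneg_left (ih z) (nonneg_of_mem_rowStochastic hQ)
        _ = 1 - α * ∑ z, Q x z * e z + (α * m) ^ 2 := by
            simp only [mul_add, mul_sub, sum_add_distrib, sum_sub_distrib, ← sum_mul, mul_one,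
              hQx, one_mul, mul_left_comm _ α, ← mul_sum]
    rw [pow_succ', ← mulVec_mulVec, tilt_mulVec_apply, hvisits]
    push_cast
    have hα0 : 0 ≤ α := by simp [α, hρ1]
    split_ifs
    · nlinarith [mul_nonneg (mul_nonneg hα0 hα0) (sub_nonneg.2 hEm),
        mul_nonneg (pow_nonneg hα0 3) (sq_nonneg (m : ℝ))]
    · nlinarith [mul_nonneg (mul_nonneg hα0 hα0) (Nat.cast_nonneg m : (0:ℝ) ≤ m)]

theorem exists_tilt_pow_mulVec_one_le {ε p : ℝ} (hε : 0 ≤ ε) (hεp : ε < p) (hp1 : p ≤ 1)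
    {T : ℕ} (hT : 0 < T) (hvisits : ∀ x, p * T ≤ ∑ k ∈ range T, (Q ^ k) x a) :
    ∃ θ ≥ 0, ∀ x, (tilt Q a (Real.exp (-θ)) ^ T *ᵥ 1) x ≤
      Real.exp (-(θ * (ε * T)) - ((p - ε) / 3) ^ 2) := by
  -- `θ = s / T` makes the Chernoff exponent `θ ε T - α E + (α T) ^ 2` at most
  -- `s (ε - p) + 2 s ^ 2 = -s ^ 2`.
  set s := (p - ε) / 3
  have hs0 : 0 < s := by simp only [s]; linarith
  have hs1 : s ≤ 1 := by simp only [s]; linarith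
  have hT1 : (1 : ℝ) ≤ T := by exact_mod_cast hT
  set θ := s / T
  have hθT : θ * T = s := div_mul_cancel₀ s (by positivity)
  have hθ0 : 0 ≤ θ := div_nonneg (by linarith) (by positivity)
  have hθ1 : θ ≤ 1 := div_le_one_of_le₀ (by linarith) (by positivity)
  set α := 1 - Real.exp (-θ)
  have hαθ : α ≤ θ := by linarith [Real.add_one_le_exp (-θ)]
  have hα0 : 0 ≤ α := sub_nonneg.2 (Real.exp_le_one_iff.2 (neg_nonpos.2 hθ0))
  have hθα : θ - θ ^ 2 ≤ α := by
    have := (abs_le.1 (Real.abs_exp_sub_one_sub_id_le (x := -θ) (by rwa [abs_neg,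
      abs_of_nonneg hθ0]))).2
    linarith [neg_sq θ]
  refine ⟨θ, hθ0, fun x => ?_⟩
  set E := ∑ k ∈ range T, (Q ^ k) x a
  have hE : p * T ≤ E := hvisits x
  have hp0 : 0 ≤ p := by linarith
  have hpT : p * T ≤ T ^ 2 := by nlinarith
  have hαE : θ * (p * T) - θ ^ 2 * T ^ 2 ≤ α * E := by
    nlinarith [mul_le_mul_of_nonneg_left hE hα0, mul_le_mul_of_nonneg_right hθα
      (by positivity : 0 ≤ p * T), mul_le_mul_of_nonneg_left hpT (sq_nonneg θ)]
  have hαT : (α * T) ^ 2 ≤ (θ * T) ^ 2 := by gcongr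
  have hs : s * p - s * ε = 3 * s ^ 2 := by simp only [s]; ring
  calc (tilt Q a (Real.exp (-θ)) ^ T *ᵥ 1) x ≤ 1 - α * E + (α * T) ^ 2 :=
        tilt_pow_mulVec_one_le hQ a (Real.exp_nonneg _) (Real.exp_le_one_iff.2 (by linarith)) T x
    _ ≤ Real.exp (-(α * E) + (α * T) ^ 2) := by
        linarith [Real.add_one_le_exp (-(α * E) + (α * T) ^ 2)]
    _ ≤ Real.exp (-(θ * (ε * T)) - s ^ 2) := by
        gcongr
        have h1 : θ * (p * T) = s * p := by rw [← hθT]; ring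
        have h2 : θ * (ε * T) = s * ε := by rw [← hθT]; ring
        rw [hθT] at hαT
        nlinarith

end Tilt

end Matrix

section Paths

variable {A : Type*}

def pathWeight (η : A → ℝ) (M : Matrix A A ℝ) {n : ℕ} (f : Fin (n + 1) → A) : ℝ :=
  η (f 0) * ∏ i : Fin n, M (f i.castSucc) (f i.succ)

theorem pathWeight_nonneg {η : A → ℝ} {M : Matrix A A ℝ} (hη : ∀ x, 0 ≤ η x)
    (hM : ∀ x y, 0 ≤ M x y) {n : ℕ} (f : Fin (n + 1) → A) : 0 ≤ pathWeight η M f :=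
  mul_nonneg (hη _) (prod_nonneg fun _ _ => hM _ _)

variable [DecidableEq A]

def visits (a : A) {n : ℕ} (f : Fin (n + 1) → A) : ℕ := #{i : Fin n | f i.castSucc = a}

/-- The quantity `L_n` of the paper (indexed from 0). -/
def selfVisits {Ω : Type*} (X : ℕ → Ω → A) (n : ℕ) (ω : Ω) : ℕ :=
  ∑ i ∈ range n, if X i ω = X n ω then 1 else 0

theorem selfVisits_eq_visits {Ω : Type*} (X : ℕ → Ω → A) (n : ℕ) (ω : Ω) :
    selfVisits X n ω = visits (X n ω) (fun i : Fin (n + 1) => X i ω) := by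
  rw [selfVisits, ← Fin.sum_univ_eq_sum_range (fun i => if X i ω = X n ω then 1 else 0),
    sum_boole, visits]
  simp

variable [Fintype A]

theorem sum_pathWeight (M : Matrix A A ℝ) (n : ℕ) (η : A → ℝ) :
    ∑ f : Fin (n + 1) → A, pathWeight η M f = η ⬝ᵥ (M ^ n *ᵥ 1) := by
  induction n generalizing η with
  | zero =>
    rw [← (Equiv.funUnique (Fin 1) A).symm.sum_comp]
    simp [pathWeight, dotProduct]
  | succ n ih =>
    rw [← (Fin.consEquiv fun _ => A).sum_comp, Fintype.sum_prod_type, pow_succ',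
      ← mulVec_mulVec, dotProduct_mulVec, ← ih, sum_comm]
    refine sum_congr rfl fun h _ => ?_
    simp only [pathWeight, Fin.consEquiv_apply, Fin.prod_univ_succ, Fin.cons_zero, Fin.cons_succ,
      Fin.castSucc_zero, ← Fin.succ_castSucc, vecMul, dotProduct, sum_mul, mul_assoc]

theorem pathWeight_tilt (η : A → ℝ) (Q : Matrix A A ℝ) (a : A) (ρ : ℝ) {n : ℕ}
    (f : Fin (n + 1) → A) : pathWeight η (tilt Q a ρ) f = ρ ^ visits a f * pathWeight η Q f := by
  simp only [pathWeight, tilt_apply, prod_mul_distrib, prod_ite, prod_const, visits]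
  ring

variable {η : A → ℝ} (hη : ∀ x, 0 ≤ η x) {Q : Matrix A A ℝ}
include hη

theorem sum_pathWeight_visits_le_le (hQnn : ∀ x y, 0 ≤ Q x y) (a : A) {θ ε : ℝ} (hθ : 0 ≤ θ)
    (n : ℕ) : ∑ f : Fin (n + 1) → A with (visits a f : ℝ) ≤ ε * n, pathWeight η Q f ≤
      Real.exp (θ * (ε * n)) * (η ⬝ᵥ (tilt Q a (Real.exp (-θ)) ^ n *ᵥ 1)) := by
  rw [← sum_pathWeight, mul_sum]
  calc ∑ f : Fin (n + 1) → A with (visits a f : ℝ) ≤ ε * n, pathWeight η Q f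
      ≤ ∑ f : Fin (n + 1) → A with (visits a f : ℝ) ≤ ε * n,
          Real.exp (θ * (ε * n)) * pathWeight η (tilt Q a (Real.exp (-θ))) f := by
        refine sum_le_sum fun f hf => ?_
        have hmarkov : 1 ≤ Real.exp (θ * (ε * n)) * Real.exp (-θ) ^ visits a f := by
          rw [← Real.exp_nat_mul, ← Real.exp_add]
          exact Real.one_le_exp (by nlinarith [(mem_filter.1 hf).2])
        rw [pathWeight_tilt, ← mul_assoc]
        exact le_mul_of_one_le_left (pathWeight_nonneg hη hQnn f) hmarkov
    _ ≤ ∑ f : Fin (n + 1) → A,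
          Real.exp (θ * (ε * n)) * pathWeight η (tilt Q a (Real.exp (-θ))) f :=
        sum_le_sum_of_subset_of_nonneg (filter_subset _ _) fun f _ _ => mul_nonneg
          (Real.exp_nonneg _) (pathWeight_nonneg hη (tilt_nonneg hQnn a (Real.exp_nonneg _)) f)

variable (hQ : Q ∈ rowStochastic ℝ A) (a : A)
include hQ

theorem exists_sum_pathWeight_visits_le_le {ε p : ℝ} (hε : 0 ≤ ε) (hεp : ε < p) (hp1 : p ≤ 1)
    {T : ℕ} (hT : 0 < T) (hvisits : ∀ x, p * T ≤ ∑ k ∈ range T, (Q ^ k) x a) :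
    ∃ C, ∀ n : ℕ, ∑ f : Fin (n + 1) → A with (visits a f : ℝ) ≤ ε * n, pathWeight η Q f ≤
      C * Real.exp (-((p - ε) / 3) ^ 2) ^ (n / T) := by
  obtain ⟨θ, hθ, hblock⟩ := exists_tilt_pow_mulVec_one_le hQ a hε hεp hp1 hT hvisits
  set c := Real.exp (-(θ * (ε * T)) - ((p - ε) / 3) ^ 2)
  have hQnn : ∀ x y, 0 ≤ Q x y := fun _ _ => nonneg_of_mem_rowStochastic hQ
  refine ⟨Real.exp (θ * (ε * T)) * ∑ x, η x, fun n => ?_⟩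
  have hgeom := pow_mulVec_one_le_pow_div (tilt_nonneg hQnn a (Real.exp_nonneg _))
    (tilt_mulVec_one_le_one hQ a (Real.exp_le_one_iff.2 (neg_nonpos.2 hθ)))
    (Real.exp_nonneg _) (fun x => by simpa using hblock x) n
  have hn : (n : ℝ) ≤ T * ((n / T + 1 : ℕ) : ℝ) := by
    exact_mod_cast (Nat.lt_mul_div_succ n hT).le
  have hexp : Real.exp (θ * (ε * n)) ≤ Real.exp (θ * (ε * T)) ^ (n / T + 1) := by
    rw [← Real.exp_nat_mul, Real.exp_le_exp]
    linarith [mul_le_mul_of_nonneg_left hn (mul_nonneg hθ hε)]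
  have hdot : η ⬝ᵥ (tilt Q a (Real.exp (-θ)) ^ n *ᵥ 1) ≤ (∑ x, η x) * c ^ (n / T) := by
    rw [sum_mul]
    exact sum_le_sum fun x _ => mul_le_mul_of_nonneg_left (by simpa using hgeom x) (hη x)
  have hc : Real.exp (θ * (ε * T)) * c = Real.exp (-((p - ε) / 3) ^ 2) := by
    rw [← Real.exp_add]
    ring_nf
  calc ∑ f : Fin (n + 1) → A with (visits a f : ℝ) ≤ ε * n, pathWeight η Q f
      ≤ Real.exp (θ * (ε * n)) * (η ⬝ᵥ (tilt Q a (Real.exp (-θ)) ^ n *ᵥ 1)) :=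
        sum_pathWeight_visits_le_le hη hQnn a hθ n
    _ ≤ Real.exp (θ * (ε * T)) ^ (n / T + 1) * ((∑ x, η x) * c ^ (n / T)) :=
        (mul_le_mul_of_nonneg_left hdot (Real.exp_nonneg _)).trans
          (mul_le_mul_of_nonneg_right hexp
            (mul_nonneg (sum_nonneg fun x _ => hη x) (pow_nonneg (Real.exp_nonneg _) _)))
    _ = Real.exp (θ * (ε * T)) * (∑ x, η x) * Real.exp (-((p - ε) / 3) ^ 2) ^ (n / T) := by
        rw [← hc, mul_pow, pow_succ]
        ring

theorem tendsto_rpow_mul_sum_pathWeight_visits_le {π : A → ℝ} (hπ : π ᵥ* Q = π)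
    (hπ0 : ∀ z, 0 ≤ π z) (hπ1 : ∑ z, π z = 1) (hprim : ∃ t, ∀ x y, 0 < (Q ^ t) x y) (β : ℝ)
    {ε : ℝ} (hε : 0 ≤ ε) (hεa : ε < π a) :
    Tendsto (fun n : ℕ => (n : ℝ) ^ β *
      ∑ f : Fin (n + 1) → A with (visits a f : ℝ) ≤ ε * n, pathWeight η Q f) atTop (nhds 0) := by
  obtain ⟨t, ht, δ, hδ, hmin⟩ := exists_minorization hQ hπ0 hπ1 hprim
  set p := (ε + π a) / 2
  have hεp : ε < p := left_lt_add_div_two.2 hεa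
  have hπa : π a ≤ 1 := hπ1 ▸ single_le_sum (fun z _ => hπ0 z) (mem_univ a)
  have hp1 : p ≤ 1 := by simp only [p]; linarith
  obtain ⟨T, hvisits, hT⟩ := ((eventually_all.2 fun x => eventually_mul_le_sum_range
    (tendsto_pow_apply hQ hπ hπ1 hmin hπ0 ht hδ x a) (add_div_two_lt_right.2 hεa)).and
    (eventually_gt_atTop 0)).exists
  obtain ⟨C, hC⟩ := exists_sum_pathWeight_visits_le_le hη hQ a hε hεp hp1 hT hvisits
  have hγ : 0 < ((p - ε) / 3) ^ 2 := by have := sub_pos.2 hεp; positivity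
  have hlim := (tendsto_rpow_mul_exp_neg_pow_div β hγ hT).const_mul C
  rw [mul_zero] at hlim
  refine squeeze_zero (fun n => mul_nonneg (by positivity) (sum_nonneg fun f _ =>
    pathWeight_nonneg hη (fun _ _ => nonneg_of_mem_rowStochastic hQ) f)) (fun n => ?_) hlim
  calc _ ≤ (n : ℝ) ^ β * (C * Real.exp (-((p - ε) / 3) ^ 2) ^ (n / T)) := by gcongr; exact hC n
    _ = _ := by ring

end Paths

section Chain

variable {A Ω : Type*} [Fintype A] [MeasurableSpace Ω] {P : Measure Ω} {X : ℕ → Ω → A}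
  {η : A → ℝ} {Q : Matrix A A ℝ}

theorem measure_path_eq (hlaw : IsRealChainLaw P X η Q) {n : ℕ} (f : Fin (n + 1) → A) :
    P {ω | ∀ i : Fin (n + 1), X i ω = f i} = ENNReal.ofReal (pathWeight η Q f) := by
  have hval : ∀ i (hi : i < n + 1), Fin.ofNat (n + 1) i = ⟨i, hi⟩ :=
    fun i hi => Fin.ext (Nat.mod_eq_of_lt hi)
  convert hlaw n (fun i => f (Fin.ofNat (n + 1) i)) using 2
  · ext ω
    simp only [Set.mem_iInter, mem_range, Fin.forall_iff]
    exact forall₂_congr fun i hi => by rw [hval i hi]; rfl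
  · rw [pathWeight, ← Fin.prod_univ_eq_prod_range
      (fun i => Q (f (Fin.ofNat (n + 1) i)) (f (Fin.ofNat (n + 1) (i + 1))))]
    congr 2
    ext i
    rw [hval i (by omega), hval (i + 1) (by omega)]
    rfl

variable (hlaw : IsRealChainLaw P X η Q) (hη : ∀ x, 0 ≤ η x) (hQnn : ∀ x y, 0 ≤ Q x y)
include hlaw hη hQnn

theorem measure_path_mem_le {n : ℕ} (S : Finset (Fin (n + 1) → A)) :
    P {ω | (fun i : Fin (n + 1) => X i ω) ∈ S} ≤ ENNReal.ofReal (∑ f ∈ S, pathWeight η Q f) := by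
  rw [ENNReal.ofReal_sum_of_nonneg fun f _ => pathWeight_nonneg hη hQnn f]
  calc P {ω | (fun i : Fin (n + 1) => X i ω) ∈ S}
      ≤ P (⋃ f ∈ S, {ω | ∀ i : Fin (n + 1), X i ω = f i}) :=
        measure_mono fun ω hω => Set.mem_biUnion hω fun _ => rfl
    _ ≤ ∑ f ∈ S, P {ω | ∀ i : Fin (n + 1), X i ω = f i} := measure_biUnion_finset_le _ _
    _ = ∑ f ∈ S, ENNReal.ofReal (pathWeight η Q f) := by simp_rw [measure_path_eq hlaw]

variable [DecidableEq A]

theorem measure_selfVisits_le_le (n : ℕ) (ε : ℝ) :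
    P {ω | (selfVisits X n ω : ℝ) ≤ ε * n} ≤ ENNReal.ofReal
      (∑ a, ∑ f : Fin (n + 1) → A with (visits a f : ℝ) ≤ ε * n, pathWeight η Q f) := by
  rw [ENNReal.ofReal_sum_of_nonneg fun a _ => sum_nonneg fun f _ => pathWeight_nonneg hη hQnn f]
  calc P {ω | (selfVisits X n ω : ℝ) ≤ ε * n}
      ≤ P (⋃ a, {ω | (fun i : Fin (n + 1) => X i ω) ∈
          ({f | (visits a f : ℝ) ≤ ε * n} : Finset (Fin (n + 1) → A))}) := by
        refine measure_mono fun ω hω => Set.mem_iUnion.2 ⟨X n ω, ?_⟩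
        simpa [selfVisits_eq_visits] using hω
    _ ≤ _ := measure_iUnion_fintype_le _ _
    _ ≤ _ := sum_le_sum fun a _ => measure_path_mem_le hlaw hη hQnn _

end Chain

theorem finite_chain_Ln_superpolynomial_general {A : Type*} [Fintype A] [DecidableEq A]
    {Ω : Type*} [MeasurableSpace Ω] (P : Measure Ω)
    (X : ℕ → Ω → A)
    (Q : A → A → ℝ) (π η : A → ℝ)
    (hQnn : ∀ x y, 0 ≤ Q x y) (hQ : ∀ x, ∑ y, Q x y = 1)
    (hprim : ∃ t : ℕ, ∀ a b, 0 < mpow Q t a b)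
    (hπpos : ∀ x, 0 < π x) (hπsum : ∑ x, π x = 1)
    (hstat : ∀ x, ∑ y, π y * Q y x = π x)
    (hηnn : ∀ a, 0 ≤ η a)
    (hlaw : IsRealChainLaw P X η Q)
    (β : ℝ) (ε : ℝ) (hε : 0 ≤ ε) (hεπ : ∀ a, ε < π a) (r : ℕ) :
    Tendsto (fun n : ℕ => (n : ℝ) ^ β *
        (P {ω | ((∑ i ∈ Finset.range n, if X i ω = X n ω then 1 else 0 : ℕ) : ℝ) ≤
          ε * n}).toReal) atTop (nhds 0) ∧
      Tendsto (fun n : ℕ => (n : ℝ) ^ β *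
        (P {ω | (∑ i ∈ Finset.range n, if X i ω = X n ω then 1 else 0 : ℕ) = r}).toReal)
        atTop (nhds 0) := by
  have hQ' : (Q : Matrix A A ℝ) ∈ rowStochastic ℝ A := mem_rowStochastic_iff_sum.2 ⟨hQnn, hQ⟩
  set B : ℝ → ℕ → ℝ := fun ε' n =>
    ∑ a, ∑ f : Fin (n + 1) → A with (visits a f : ℝ) ≤ ε' * n, pathWeight η Q f
  have hB : ∀ ε', 0 ≤ ε' → (∀ a, ε' < π a) → Tendsto (fun n : ℕ => (n : ℝ) ^ β * B ε' n) atTop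
      (nhds 0) := fun ε' hε' hε'π => by
    simpa [B, mul_sum] using tendsto_finsetSum univ fun a _ =>
      tendsto_rpow_mul_sum_pathWeight_visits_le hηnn hQ' a (funext hstat)
        (fun z => (hπpos z).le) hπsum
        (hprim.imp fun t ht x y => by rw [← mpow_eq_pow Q t]; exact ht x y) β hε' (hε'π a)
  have hP : ∀ {E : Set Ω} ε' n, E ⊆ {ω | (selfVisits X n ω : ℝ) ≤ ε' * n} →
      (n : ℝ) ^ β * (P E).toReal ≤ (n : ℝ) ^ β * B ε' n := fun ε' n hE => by
    gcongr
    exact ENNReal.toReal_le_of_le_ofReal (sum_nonneg fun a _ => sum_nonneg fun f _ =>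
      pathWeight_nonneg hηnn hQnn f) ((measure_mono hE).trans
        (measure_selfVisits_le_le hlaw hηnn hQnn _ _))
  obtain ⟨m, hm, hmπ⟩ := exists_pos_forall_lt hπpos
  refine ⟨squeeze_zero (fun n => by positivity) (fun n => hP ε n subset_rfl) (hB ε hε hεπ),
    squeeze_zero' (.of_forall fun n => by positivity) ?_ (hB m hm.le hmπ)⟩
  filter_upwards [eventually_ge_atTop ⌈r / m⌉₊] with n hn
  refine hP m n fun ω (hω : selfVisits X n ω = r) => ?_
  have hr := (div_le_iff₀ hm).1 (Nat.ceil_le.1 hn)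
  simp only [Set.mem_ofPred_eq, hω]
  linarith

/-- Lemma 6.1, part 1: for an irreducible aperiodic Markov chain on a
finite state space with stationary distribution `π`, for any `β ∈ ℝ`, any
`ε ∈ [0, π_∧)`, any `r > 0`, and any initial distribution `η`:
`n^β P_η{L_n/n ≤ ε} → 0` and `n^β P_η{L_n = r} → 0`. (Indexed from 0:
`L_n = Σ_{i<n} 1{X_i = X_n}`.) -/
theorem finite_chain_Ln_superpolynomial {A : Type*} [Fintype A] [Nonempty A] [DecidableEq A]
    {Ω : Type*} [MeasurableSpace Ω] (P : Measure Ω) [IsProbabilityMeasure P]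
    (X : ℕ → Ω → A)
    (Q : A → A → ℝ) (π η : A → ℝ)
    (hQnn : ∀ x y, 0 ≤ Q x y) (hQ : ∀ x, ∑ y, Q x y = 1)
    (hprim : ∃ t : ℕ, ∀ a b, 0 < mpow Q t a b)
    (hπpos : ∀ x, 0 < π x) (hπsum : ∑ x, π x = 1)
    (hstat : ∀ x, ∑ y, π y * Q y x = π x)
    (hηnn : ∀ a, 0 ≤ η a) (hηsum : ∑ a, η a = 1)
    (hlaw : IsRealChainLaw P X η Q)
    (β : ℝ) (ε : ℝ) (hε : 0 ≤ ε) (hεπ : ∀ a, ε < π a) (r : ℕ) (hrpos : 0 < r) :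
    Tendsto (fun n : ℕ => (n : ℝ) ^ β *
        (P {ω | ((∑ i ∈ Finset.range n, if X i ω = X n ω then 1 else 0 : ℕ) : ℝ) ≤
          ε * n}).toReal) atTop (nhds 0) ∧
      Tendsto (fun n : ℕ => (n : ℝ) ^ β *
        (P {ω | (∑ i ∈ Finset.range n, if X i ω = X n ω then 1 else 0 : ℕ) = r}).toReal)
        atTop (nhds 0) :=
  finite_chain_Ln_superpolynomial_general P X Q π η hQnn hQ hprim hπpos hπsum hstat hηnn hlaw β ε hε
    hεπ r
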